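/- arXiv:2009.13571 — 2 statements merged into one kernel-verified Lean document; each statement's English description precedes it below -/
import Mathlib

section
/- Let φ : ℝ → ℝ be measurable with φ(0) = 0 and suppose there exists C ≥ 0 such that |φ(u)| ≤ C·|u| for all u ∈ ℝ. Then the following are equivalent: (i) for all τ ∈ ℝ and all signals x in L²[0,∞), |∫₀^∞ x(t+τ)·φ(x(t)) dt| ≤ ∫₀^∞ x(t)·φ(x(t)) dt; (ii) φ is monotone nondecreasing and odd almost everywhere, i.e. φ(−u) = −φ(u) for almost every u ∈ ℝ. -/
/-!
Necessity: feeding the step signal a, b, a, b, … (2N unit steps) with shift τ = 1 into the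
inequality and letting N → ∞ gives |a φ(b) + b φ(a)| ≤ a φ(a) + b φ(b) for all a, b. This says
(a - b)(φ(a) - φ(b)) ≥ 0, i.e. φ is monotone, and, with b replaced by -b,
(a - b)(φ(a) + φ(-b)) ≥ 0, which forces φ(-b) = -φ(b) at every continuity point b of φ, hence
off a countable set.

Sufficiency: the primitive Φ(u) = ∫₀ᵘ φ is convex and even, so the Fenchel–Young inequality gives
|y φ(b)| ≤ Φ(y) - Φ(b) + b φ(b). Take y = x(t + τ), b = x(t) and integrate over t ≥ 0; the
Φ-terms contribute ∫_{t≥0} Φ(x(t + τ)) - ∫_{t≥0} Φ(x(t)) ≤ 0 because Φ ≥ 0 and Φ(x(t)) = 0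
for t < 0.
-/

open MeasureTheory Set

/-- A signal in L²[0,∞): square integrable over ℝ and vanishing on (−∞,0). -/
def IsSignal (x : ℝ → ℝ) : Prop :=
  MemLp x 2 volume ∧ ∀ t < (0:ℝ), x t = 0

lemma indicator_Ici_comp_floor_eq_sum {H : ℕ → ℝ} {n : ℕ} (hH : ∀ k ≥ n, H k = 0) :
    (Ici 0).indicator (fun t : ℝ => H ⌊t⌋₊)
      = ∑ k ∈ Finset.range n, (Ico (k : ℝ) (k + 1)).indicator (fun _ => H k) := by
  ext t
  simp only [Finset.sum_apply, indicator_apply, mem_Ici, mem_Ico]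
  by_cases ht : 0 ≤ t
  · have hk (k : ℕ) : (↑k ≤ t ∧ t < ↑k + 1) ↔ ⌊t⌋₊ = k := (Nat.floor_eq_iff ht).symm
    simp only [ht, if_true, hk, Finset.sum_ite_eq, Finset.mem_range]
    split_ifs with h
    · rfl
    · exact hH _ (not_lt.1 h)
  · push Not at ht
    simp only [not_le.2 ht, if_false]
    refine (Finset.sum_eq_zero fun k _ => if_neg fun h => ?_).symm
    linarith [h.1, (Nat.cast_nonneg k : (0:ℝ) ≤ k)]

lemma setIntegral_Ici_comp_floor {H : ℕ → ℝ} {n : ℕ} (hH : ∀ k ≥ n, H k = 0) :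
    ∫ t in Ici (0 : ℝ), H ⌊t⌋₊ = ∑ k ∈ Finset.range n, H k := by
  rw [← integral_indicator measurableSet_Ici, indicator_Ici_comp_floor_eq_sum hH]
  simp only [Finset.sum_apply]
  rw [integral_finsetSum]
  · refine Finset.sum_congr rfl fun k _ => ?_
    simp [integral_indicator_const _ measurableSet_Ico]
  · exact fun k _ => (integrable_indicator_iff measurableSet_Ico).2 (integrableOn_const (by simp))

lemma memLp_indicator_Ici_comp_floor {H : ℕ → ℝ} {n : ℕ} (hH : ∀ k ≥ n, H k = 0) :
    MemLp ((Ici 0).indicator (fun t : ℝ => H ⌊t⌋₊)) 2 volume := by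
  rw [indicator_Ici_comp_floor_eq_sum hH]
  exact memLp_finsetSum' _ fun k _ => memLp_indicator_const 2 measurableSet_Ico _ (Or.inr (by simp))

noncomputable def stepSignal (c : ℕ → ℝ) : ℝ → ℝ := (Ici 0).indicator fun t => c ⌊t⌋₊

lemma isSignal_stepSignal {c : ℕ → ℝ} {n : ℕ} (hc : ∀ k ≥ n, c k = 0) :
    IsSignal (stepSignal c) :=
  ⟨memLp_indicator_Ici_comp_floor hc, fun _ ht => indicator_of_notMem (not_le.2 ht) _⟩

lemma setIntegral_Ici_stepSignal_add_mul_comp (φ : ℝ → ℝ) {c : ℕ → ℝ} {n : ℕ}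
    (hc : ∀ k ≥ n, c k = 0) (m : ℕ) :
    ∫ t in Ici (0 : ℝ), stepSignal c (t + m) * φ (stepSignal c t)
      = ∑ k ∈ Finset.range n, c (k + m) * φ (c k) := by
  rw [← setIntegral_Ici_comp_floor (H := fun k => c (k + m) * φ (c k))
    fun k hk => by rw [hc (k + m) (by omega), zero_mul]]
  refine setIntegral_congr_fun measurableSet_Ici fun t (ht : 0 ≤ t) => ?_
  have htm : (0 : ℝ) ≤ t + m := by positivity
  simp only [stepSignal, indicator_of_mem (mem_Ici.2 ht), indicator_of_mem (mem_Ici.2 htm),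
    Nat.floor_add_natCast ht]

lemma sum_range_two_mul_of_periodic {f : ℕ → ℝ} (hf : ∀ k, f (k + 2) = f k) (N : ℕ) :
    ∑ k ∈ Finset.range (2 * N), f k = N * (f 0 + f 1) := by
  have hf' : ∀ j, f (2 * j) = f 0 ∧ f (2 * j + 1) = f 1 := by
    intro j
    induction j with
    | zero => simp
    | succ j ih => rw [show 2 * (j + 1) = 2 * j + 2 by ring, hf, add_right_comm, hf]; exact ih
  induction N with
  | zero => simp
  | succ N ih =>
    rw [show 2 * (N + 1) = 2 * N + 1 + 1 by ring, Finset.sum_range_succ, Finset.sum_range_succ, ih,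
      (hf' N).1, (hf' N).2]
    push_cast; ring

lemma abs_le_of_forall_abs_nat_mul_sub_le {A B R : ℝ}
    (h : ∀ N : ℕ, |(N + 1) * A - B| ≤ (N + 1) * R) : |A| ≤ R := by
  by_contra! hlt
  obtain ⟨N, hN⟩ := exists_nat_gt (|B| / (|A| - R))
  have hB : |B| < N * (|A| - R) := (div_lt_iff₀ (sub_pos.2 hlt)).1 hN
  have hN1 : (0 : ℝ) ≤ N + 1 := by positivity
  have hrev : (N + 1) * |A| - |B| ≤ |(N + 1) * A - B| := by
    simpa [abs_mul, abs_of_nonneg hN1] using abs_sub_abs_le_abs_sub ((N + 1) * A) B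
  nlinarith [h N]

def alternatingBlock (a b : ℝ) (N k : ℕ) : ℝ := if k < 2 * N then (if Even k then a else b) else 0

section AlternatingBlock

variable (φ : ℝ → ℝ) (a b : ℝ)

lemma alternatingBlock_of_lt {N k : ℕ} (hk : k < 2 * N) :
    alternatingBlock a b N k = if Even k then a else b :=
  if_pos hk

lemma alternatingBlock_of_le {N k : ℕ} (hk : 2 * N ≤ k) : alternatingBlock a b N k = 0 :=
  if_neg (not_lt.2 hk)

lemma sum_alternatingBlock_mul_comp (N : ℕ) :
    ∑ k ∈ Finset.range (2 * N), alternatingBlock a b N k * φ (alternatingBlock a b N k)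
      = N * (a * φ a + b * φ b) := by
  rw [Finset.sum_congr rfl fun k hk => by rw [alternatingBlock_of_lt a b (Finset.mem_range.1 hk)],
    sum_range_two_mul_of_periodic fun k => by simp [Nat.even_add]]
  simp

lemma sum_alternatingBlock_succ_mul_comp (N : ℕ) :
    ∑ k ∈ Finset.range (2 * (N + 1)),
        alternatingBlock a b (N + 1) (k + 1) * φ (alternatingBlock a b (N + 1) k)
      = (N + 1) * (a * φ b + b * φ a) - a * φ b := by
  have hbulk : ∑ k ∈ Finset.range (2 * N),
      alternatingBlock a b (N + 1) (k + 1) * φ (alternatingBlock a b (N + 1) k)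
        = N * (b * φ a + a * φ b) := by
    rw [Finset.sum_congr rfl fun k hk => by
        have := Finset.mem_range.1 hk
        rw [alternatingBlock_of_lt a b (show k < 2 * (N + 1) by omega),
          alternatingBlock_of_lt a b (show k + 1 < 2 * (N + 1) by omega)],
      sum_range_two_mul_of_periodic fun k => by simp [Nat.even_add]]
    simp
  rw [show 2 * (N + 1) = 2 * N + 1 + 1 by ring, Finset.sum_range_succ, Finset.sum_range_succ,
    hbulk, alternatingBlock_of_le a b (show 2 * (N + 1) ≤ 2 * N + 1 + 1 by omega),
    alternatingBlock_of_lt a b (show 2 * N < 2 * (N + 1) by omega),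
    alternatingBlock_of_lt a b (show 2 * N + 1 < 2 * (N + 1) by omega)]
  simp only [Nat.not_even_bit1, ↓reduceIte, even_two, Even.mul_right, zero_mul, add_zero]
  ring

end AlternatingBlock

theorem abs_mul_add_mul_le_of_shift_ineq {φ : ℝ → ℝ}
    (h : ∀ (τ : ℝ) (x : ℝ → ℝ), IsSignal x →
      |∫ t in Ici (0:ℝ), x (t + τ) * φ (x t)| ≤ ∫ t in Ici (0:ℝ), x t * φ (x t))
    (a b : ℝ) : |a * φ b + b * φ a| ≤ a * φ a + b * φ b := by
  refine abs_le_of_forall_abs_nat_mul_sub_le (B := a * φ b) fun N => ?_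
  have hc : ∀ k ≥ 2 * (N + 1), alternatingBlock a b (N + 1) k = 0 :=
    fun _ hk => alternatingBlock_of_le a b hk
  have hcross := setIntegral_Ici_stepSignal_add_mul_comp φ hc 1
  have hself := setIntegral_Ici_stepSignal_add_mul_comp φ hc 0
  simp only [Nat.cast_one, Nat.cast_zero, add_zero] at hcross hself
  have hineq := h 1 _ (isSignal_stepSignal hc)
  rwa [hcross, hself, sum_alternatingBlock_succ_mul_comp, sum_alternatingBlock_mul_comp,
    Nat.cast_succ] at hineq

lemma monotone_of_abs_mul_add_mul_le {φ : ℝ → ℝ}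
    (key : ∀ a b : ℝ, |a * φ b + b * φ a| ≤ a * φ a + b * φ b) : Monotone φ := by
  refine monotone_iff_forall_lt.2 fun u v huv => sub_nonneg.1 <|
    nonneg_of_mul_nonneg_right (a := v - u) ?_ (sub_pos.2 huv)
  linarith [le_of_abs_le (key u v)]

lemma neg_eq_neg_of_continuousAt {φ : ℝ → ℝ}
    (key : ∀ a b : ℝ, |a * φ b + b * φ a| ≤ a * φ a + b * φ b) {b : ℝ}
    (hb : ContinuousAt φ b) : φ (-b) = -φ b := by
  have hsign (a : ℝ) : 0 ≤ (a - b) * (φ a + φ (-b)) := by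
    linarith [neg_le_of_abs_le (key a (-b))]
  have hright : -φ (-b) ≤ φ b :=
    ge_of_tendsto (hb.mono_left nhdsWithin_le_nhds) <| eventually_nhdsWithin_of_forall (s := Ioi b)
      fun a (ha : b < a) => by nlinarith [hsign a]
  have hleft : φ b ≤ -φ (-b) :=
    le_of_tendsto (hb.mono_left nhdsWithin_le_nhds) <| eventually_nhdsWithin_of_forall (s := Iio b)
      fun a (ha : a < b) => by nlinarith [hsign a]
  linarith

lemma ae_neg_eq_neg_of_abs_mul_add_mul_le {φ : ℝ → ℝ}
    (key : ∀ a b : ℝ, |a * φ b + b * φ a| ≤ a * φ a + b * φ b) :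
    ∀ᵐ u ∂(volume : Measure ℝ), φ (-u) = -φ u := by
  refine measure_mono_null (fun u hu hcont => hu (neg_eq_neg_of_continuousAt key hcont))
    ((monotone_of_abs_mul_add_mul_le key).countable_not_continuousAt.measure_zero volume)

noncomputable def primitive (φ : ℝ → ℝ) (u : ℝ) : ℝ := ∫ s in (0 : ℝ)..u, φ s

section Primitive

variable {φ : ℝ → ℝ}

@[simp] lemma primitive_zero : primitive φ 0 = 0 := intervalIntegral.integral_same

lemma Monotone.mul_sub_le_intervalIntegral (hφ : Monotone φ) (a b : ℝ) :
    φ b * (a - b) ≤ ∫ s in b..a, φ s := by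
  have hsub : ∫ s in b..a, (φ s - φ b) = (∫ s in b..a, φ s) - φ b * (a - b) := by
    rw [intervalIntegral.integral_sub hφ.intervalIntegrable intervalIntegrable_const,
      intervalIntegral.integral_const, smul_eq_mul, mul_comm]
  suffices 0 ≤ ∫ s in b..a, (φ s - φ b) by linarith
  rcases le_total b a with hba | hab
  · exact intervalIntegral.integral_nonneg hba fun s hs => sub_nonneg.2 (hφ hs.1)
  · rw [intervalIntegral.integral_symm, ← intervalIntegral.integral_neg]
    exact intervalIntegral.integral_nonneg hab fun s hs => neg_nonneg.2 (sub_nonpos.2 (hφ hs.2))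

lemma Monotone.mul_sub_le_primitive_sub (hφ : Monotone φ) (a b : ℝ) :
    φ b * (a - b) ≤ primitive φ a - primitive φ b := by
  rw [primitive, primitive, intervalIntegral.integral_interval_sub_left hφ.intervalIntegrable
    hφ.intervalIntegrable]
  exact hφ.mul_sub_le_intervalIntegral a b

lemma primitive_neg (hodd : ∀ᵐ u ∂(volume : Measure ℝ), φ (-u) = -φ u) (u : ℝ) :
    primitive φ (-u) = primitive φ u := by
  have h : ∫ s in (0 : ℝ)..u, φ (-s) = ∫ s in (0 : ℝ)..u, -φ s :=
    intervalIntegral.integral_congr_ae (hodd.mono fun s hs _ => hs)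
  rw [intervalIntegral.integral_comp_neg, intervalIntegral.integral_neg, neg_zero,
    intervalIntegral.integral_symm] at h
  exact neg_inj.1 h

lemma Monotone.abs_mul_le_primitive_sub_add (hφ : Monotone φ)
    (hodd : ∀ᵐ u ∂(volume : Measure ℝ), φ (-u) = -φ u) (y b : ℝ) :
    |y * φ b| ≤ primitive φ y - primitive φ b + b * φ b := by
  have hpos := hφ.mul_sub_le_primitive_sub y b
  have hneg := hφ.mul_sub_le_primitive_sub (-y) b
  rw [primitive_neg hodd] at hneg
  exact abs_le.2 ⟨by linarith, by linarith⟩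

lemma Monotone.primitive_nonneg (hφ : Monotone φ)
    (hodd : ∀ᵐ u ∂(volume : Measure ℝ), φ (-u) = -φ u) (y : ℝ) : 0 ≤ primitive φ y := by
  have h := hφ.abs_mul_le_primitive_sub_add hodd y 0
  rw [primitive_zero, zero_mul, sub_zero, add_zero] at h
  exact (abs_nonneg _).trans h

lemma Monotone.primitive_le_mul (hφ : Monotone φ) (u : ℝ) : primitive φ u ≤ u * φ u := by
  have h := hφ.mul_sub_le_primitive_sub 0 u
  rw [primitive_zero] at h
  linarith

end Primitive

lemma integrable_mul_comp_of_abs_le {φ x : ℝ → ℝ} (hφ : Measurable φ) {C : ℝ}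
    (hC : ∀ u, |φ u| ≤ C * |u|) (hx : MemLp x 2 volume) :
    Integrable (fun t => x t * φ (x t)) volume := by
  refine (hx.integrable_sq.const_mul C).mono'
    (hx.aestronglyMeasurable.mul (hφ.comp_aemeasurable hx.aemeasurable).aestronglyMeasurable)
    (ae_of_all _ fun t => ?_)
  rw [Real.norm_eq_abs, abs_mul, ← sq_abs (x t)]
  nlinarith [hC (x t), abs_nonneg (x t)]

lemma Monotone.integrable_primitive_comp {φ x : ℝ → ℝ} (hφ : Monotone φ)
    (hodd : ∀ᵐ u ∂(volume : Measure ℝ), φ (-u) = -φ u) {C : ℝ}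
    (hC : ∀ u, |φ u| ≤ C * |u|) (hx : MemLp x 2 volume) :
    Integrable (fun t => primitive φ (x t)) volume := by
  have hcont : Continuous (primitive φ) :=
    intervalIntegral.continuous_primitive (fun _ _ => hφ.intervalIntegrable) 0
  refine (integrable_mul_comp_of_abs_le hφ.measurable hC hx).mono'
    (hcont.comp_aestronglyMeasurable hx.aestronglyMeasurable) (ae_of_all _ fun t => ?_)
  rw [Real.norm_eq_abs, abs_of_nonneg (hφ.primitive_nonneg hodd _)]
  exact hφ.primitive_le_mul _

lemma setIntegral_Ici_comp_add_le {g : ℝ → ℝ} (hg : Integrable g volume) (hg0 : ∀ t, 0 ≤ g t)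
    (hneg : ∀ t < 0, g t = 0) (τ : ℝ) :
    ∫ t in Ici (0 : ℝ), g (t + τ) ≤ ∫ t in Ici (0 : ℝ), g t :=
  calc ∫ t in Ici (0 : ℝ), g (t + τ)
      ≤ ∫ t, g (t + τ) := setIntegral_le_integral (hg.comp_add_right τ) (ae_of_all _ fun _ => hg0 _)
    _ = ∫ t, g t := integral_add_right_eq_self g τ
    _ = ∫ t in Ici (0 : ℝ), g t :=
      (setIntegral_eq_integral_of_forall_compl_eq_zero fun t ht => hneg t (not_le.1 ht)).symm

theorem abs_setIntegral_shift_mul_comp_le {φ x : ℝ → ℝ} (hφ : Monotone φ)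
    (hodd : ∀ᵐ u ∂(volume : Measure ℝ), φ (-u) = -φ u) {C : ℝ}
    (hC : ∀ u, |φ u| ≤ C * |u|) (hx : IsSignal x) (τ : ℝ) :
    |∫ t in Ici (0 : ℝ), x (t + τ) * φ (x t)| ≤ ∫ t in Ici (0 : ℝ), x t * φ (x t) := by
  set Φ := primitive φ
  have hΦx : Integrable (fun t => Φ (x t)) volume := hφ.integrable_primitive_comp hodd hC hx.1
  have hxφx := integrable_mul_comp_of_abs_le hφ.measurable hC hx.1
  have hshift : ∫ t in Ici (0 : ℝ), Φ (x (t + τ)) ≤ ∫ t in Ici (0 : ℝ), Φ (x t) :=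
    setIntegral_Ici_comp_add_le hΦx (fun t => hφ.primitive_nonneg hodd _)
      (fun t ht => by simp [Φ, hx.2 t ht]) τ
  calc |∫ t in Ici (0 : ℝ), x (t + τ) * φ (x t)|
      ≤ ∫ t in Ici (0 : ℝ), |x (t + τ) * φ (x t)| := abs_integral_le_integral_abs
    _ ≤ ∫ t in Ici (0 : ℝ), (Φ (x (t + τ)) - Φ (x t) + x t * φ (x t)) :=
      integral_mono_of_nonneg (ae_of_all _ fun _ => abs_nonneg _)
        (((hΦx.comp_add_right τ).sub hΦx).add hxφx).integrableOn
        (ae_of_all _ fun t => hφ.abs_mul_le_primitive_sub_add hodd _ _)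
    _ = (∫ t in Ici (0 : ℝ), Φ (x (t + τ))) - (∫ t in Ici (0 : ℝ), Φ (x t))
          + ∫ t in Ici (0 : ℝ), x t * φ (x t) := by
      rw [integral_add (f := fun t => Φ (x (t + τ)) - Φ (x t))
          ((hΦx.comp_add_right τ).sub hΦx).integrableOn hxφx.integrableOn,
        integral_sub (hΦx.comp_add_right τ).integrableOn hΦx.integrableOn]
    _ ≤ ∫ t in Ici (0 : ℝ), x t * φ (x t) := by linarith

theorem static_abs_shift_ineq_iff_monotone_odd_general
    (φ : ℝ → ℝ)
    (hbound : ∃ C : ℝ, 0 ≤ C ∧ ∀ u : ℝ, |φ u| ≤ C * |u|) :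
    (∀ (τ : ℝ) (x : ℝ → ℝ), IsSignal x →
      |∫ t in Ici (0:ℝ), x (t + τ) * φ (x t)| ≤ ∫ t in Ici (0:ℝ), x t * φ (x t))
    ↔ (Monotone φ ∧ ∀ᵐ u ∂(volume : Measure ℝ), φ (-u) = -φ u) := by
  refine ⟨fun h => ?_, fun ⟨hmono, hodd⟩ τ x hx => ?_⟩
  · have key := abs_mul_add_mul_le_of_shift_ineq h
    exact ⟨monotone_of_abs_mul_add_mul_le key, ae_neg_eq_neg_of_abs_mul_add_mul_le key⟩
  · obtain ⟨C, -, hC⟩ := hbound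
    exact abs_setIntegral_shift_mul_comp_le hmono hodd hC hx τ

theorem static_abs_shift_ineq_iff_monotone_odd
    (φ : ℝ → ℝ) (hφ : Measurable φ) (hφ0 : φ 0 = 0)
    (hbound : ∃ C : ℝ, 0 ≤ C ∧ ∀ u : ℝ, |φ u| ≤ C * |u|) :
    (∀ (τ : ℝ) (x : ℝ → ℝ), IsSignal x →
      |∫ t in Ici (0:ℝ), x (t + τ) * φ (x t)| ≤ ∫ t in Ici (0:ℝ), x t * φ (x t))
    ↔ (Monotone φ ∧ ∀ᵐ u ∂(volume : Measure ℝ), φ (-u) = -φ u) :=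
  static_abs_shift_ineq_iff_monotone_odd_general φ hbound
end

section
/- Let 0 ≤ a < b be real numbers and let Δ be a map on signals such that for every signal x in L²[0,∞), the image y := Δx is again a signal in L²[0,∞). Then the following are equivalent: (i) for all τ ∈ ℝ and all signals x in L²[0,∞), ∫₀^∞ (x − b⁻¹y)(t+τ)·(−a·x + y)(t) dt ≤ ∫₀^∞ (x − b⁻¹y)(t)·(−a·x + y)(t) dt; (ii) for every z ∈ L¹(ℝ) with z(t) ≥ 0 for almost every t and ‖z‖₁ ≤ 1, and every signal x in L²[0,∞), one has ⟨x − b⁻¹y, (−a·x + y) − z∗(−a·x + y)⟩ ≥ 0. -/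
open MeasureTheory Set

/-- Convolution (z∗w)(t) = ∫ z(s)·w(t−s) ds. -/
noncomputable def conv (z w : ℝ → ℝ) : ℝ → ℝ := fun t => ∫ s, z s * w (t - s)

/-!
With `u = x - b⁻¹ y` and `v = -a x + y`, both conditions are statements about the
cross-correlation `F = correlation u v`, `F τ = ∫ u (t + τ) * v t`. As `v` vanishes on
`(-∞, 0)`, condition (i) says that `F` is maximal at `0`, and by Fubini
`⟨u, v - z ∗ v⟩ = F 0 - ∫ z s * F s`. The function `F` is continuous, bounded, and tends to `0`
at `+∞`, so `F 0 ≥ 0`; hence (i) gives (ii) because `z` is a sub-probability density.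
Conversely, (ii) for the box kernel `z = ε⁻¹ 𝟙_(τ, τ+ε]` bounds the mean of `F` over
`(τ, τ + ε]` by `F 0`, and `ε → 0` gives `F τ ≤ F 0`.
-/

open Filter Topology

lemma integral_abs_mul_le_sqrt_mul_sqrt {α : Type*} [MeasurableSpace α] {μ : Measure α}
    {f g : α → ℝ} (hf : MemLp f 2 μ) (hg : MemLp g 2 μ) :
    ∫ t, |f t * g t| ∂μ ≤ √(∫ t, f t ^ 2 ∂μ) * √(∫ t, g t ^ 2 ∂μ) := by
  have two : ENNReal.ofReal 2 = 2 := by norm_num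
  have holder := integral_mul_norm_le_Lp_mul_Lq Real.HolderConjugate.two_two
    (two ▸ hf : MemLp f (ENNReal.ofReal 2) μ) (two ▸ hg : MemLp g (ENNReal.ofReal 2) μ)
  simp only [Real.norm_eq_abs, ← abs_mul, Real.rpow_two, sq_abs] at holder
  simpa only [Real.sqrt_eq_rpow, one_div] using holder

noncomputable def correlation (u v : ℝ → ℝ) (τ : ℝ) : ℝ := ∫ t, u (t + τ) * v t

section Correlation

variable {u v : ℝ → ℝ}

lemma correlation_eq_integral_sub (u v : ℝ → ℝ) (τ : ℝ) :
    correlation u v τ = ∫ s, u s * v (s - τ) := by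
  unfold correlation
  simpa only [add_sub_cancel_right] using
    integral_add_right_eq_self (μ := volume) (fun s => u s * v (s - τ)) τ

lemma correlation_eq_setIntegral (hv0 : ∀ t < (0:ℝ), v t = 0) (τ : ℝ) :
    correlation u v τ = ∫ t in Ici 0, u (t + τ) * v t :=
  (setIntegral_eq_integral_of_forall_compl_eq_zero fun t ht => by
    rw [hv0 t (not_le.1 ht), mul_zero]).symm

lemma integral_abs_mul_sub_le (hu : MemLp u 2 volume) (hv : MemLp v 2 volume) (s : ℝ) :
    ∫ t, |u t * v (t - s)| ≤ √(∫ t, u t ^ 2) * √(∫ t, v t ^ 2) := by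
  have hvs : MemLp (fun t => v (t - s)) 2 volume :=
    hv.comp_measurePreserving (measurePreserving_sub_right volume s)
  simpa only [integral_sub_right_eq_self (fun t => v t ^ 2) s] using
    integral_abs_mul_le_sqrt_mul_sqrt hu hvs

lemma abs_correlation_le (hu : MemLp u 2 volume) (hv : MemLp v 2 volume) (τ : ℝ) :
    |correlation u v τ| ≤ √(∫ t, u t ^ 2) * √(∫ t, v t ^ 2) := by
  rw [correlation_eq_integral_sub]
  exact (abs_integral_le_integral_abs).trans (integral_abs_mul_sub_le hu hv τ)

lemma correlation_indicator_Ici (hv0 : ∀ t < (0:ℝ), v t = 0) (τ : ℝ) :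
    correlation ((Ici τ).indicator u) v τ = correlation u v τ := by
  refine integral_congr_ae (Eventually.of_forall fun t => ?_)
  rcases lt_or_ge t 0 with ht | ht
  · simp only [hv0 t ht, mul_zero]
  · simp only [indicator_of_mem (show t + τ ∈ Ici τ by simp [ht])]

lemma tendsto_setIntegral_Ici_atTop {g : ℝ → ℝ} (hg : Integrable g) :
    Tendsto (fun τ => ∫ t in Ici τ, g t) atTop (𝓝 0) := by
  have hempty : (⋂ τ : ℝ, Ici τ) = ∅ :=
    eq_empty_of_forall_notMem fun t ht => absurd (mem_iInter.1 ht (t + 1)) (by simp)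
  simpa only [hempty, Measure.restrict_empty, integral_zero_measure] using
    tendsto_setIntegral_of_antitone (fun _ => measurableSet_Ici)
      (fun _ _ hij => Ici_subset_Ici.2 hij) ⟨0, hg.integrableOn⟩

lemma tendsto_correlation_atTop (hu : MemLp u 2 volume) (hv : MemLp v 2 volume)
    (hv0 : ∀ t < (0:ℝ), v t = 0) : Tendsto (correlation u v) atTop (𝓝 0) := by
  have hbound : ∀ τ, |correlation u v τ| ≤ √(∫ t in Ici τ, u t ^ 2) * √(∫ t, v t ^ 2) := by
    intro τ
    have hsq : (fun t => (Ici τ).indicator u t ^ 2) = (Ici τ).indicator fun t => u t ^ 2 :=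
      (indicator_comp_of_zero (g := fun r : ℝ => r ^ 2) (by simp)).symm
    rw [← correlation_indicator_Ici hv0, ← integral_indicator measurableSet_Ici, ← hsq]
    exact abs_correlation_le (hu.indicator measurableSet_Ici) hv τ
  have htail : Tendsto (fun τ => √(∫ t in Ici τ, u t ^ 2) * √(∫ t, v t ^ 2)) atTop (𝓝 0) := by
    simpa using ((Real.continuous_sqrt.tendsto 0).comp
      (tendsto_setIntegral_Ici_atTop hu.integrable_sq)).mul_const √(∫ t, v t ^ 2)
  exact squeeze_zero_norm hbound htail

lemma continuous_correlation (hu : MemLp u 2 volume) (hv : MemLp v 2 volume) :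
    Continuous (correlation u v) := by
  let shift : ℝ → C(ℝ, ℝ) := fun τ => ⟨fun t => t + τ, by fun_prop⟩
  have hshift : Continuous shift :=
    ContinuousMap.continuous_of_continuous_uncurry _ (continuous_snd.add continuous_fst)
  have hmp : ∀ τ, MeasurePreserving (shift τ) volume volume := fun τ =>
    measurePreserving_add_right volume τ
  have hcoe : ∀ τ, (Lp.compMeasurePreserving (shift τ) (hmp τ) (hu.toLp u) : ℝ → ℝ)
      =ᵐ[volume] fun t => u (t + τ) := fun τ =>
    (Lp.coeFn_compMeasurePreserving _ (hmp τ)).trans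
      ((hmp τ).quasiMeasurePreserving.ae_eq_comp hu.coeFn_toLp)
  have hinner : correlation u v = fun τ =>
      inner ℝ (Lp.compMeasurePreserving (shift τ) (hmp τ) (hu.toLp u)) (hv.toLp v) := by
    funext τ
    rw [L2.inner_def]
    refine integral_congr_ae ?_
    filter_upwards [hcoe τ, hv.coeFn_toLp] with t hut hvt
    simp only [RCLike.inner_apply, conj_trivial, hut, hvt, mul_comm]
  rw [hinner]
  exact (continuous_const.compMeasurePreservingLp hshift hmp (by norm_num)).inner
    continuous_const

end Correlation

section Convolution

variable {u v z : ℝ → ℝ}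

lemma integrable_conv_integrand (hu : MemLp u 2 volume) (hv : MemLp v 2 volume)
    (hz : Integrable z) :
    Integrable (fun q : ℝ × ℝ => z q.1 * (u q.2 * v (q.2 - q.1))) (volume.prod volume) := by
  have hdiff : Measure.QuasiMeasurePreserving (fun q : ℝ × ℝ => q.2 - q.1)
      (volume.prod volume) volume :=
    Measure.quasiMeasurePreserving_snd.comp
      (measurePreserving_prod_sub volume volume).quasiMeasurePreserving
  have hmeas : AEStronglyMeasurable (fun q : ℝ × ℝ => z q.1 * (u q.2 * v (q.2 - q.1)))
      (volume.prod volume) :=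
    hz.aestronglyMeasurable.comp_fst.mul (hu.aestronglyMeasurable.comp_snd.mul
      (hv.aestronglyMeasurable.comp_quasiMeasurePreserving hdiff))
  refine (integrable_prod_iff hmeas).2 ⟨Eventually.of_forall fun s => ?_, ?_⟩
  · exact (hu.integrable_mul (hv.comp_measurePreserving
      (measurePreserving_sub_right volume s))).const_mul (z s)
  · refine (hz.abs.mul_const (√(∫ t, u t ^ 2) * √(∫ t, v t ^ 2))).mono'
      hmeas.norm.integral_prod_right' (Eventually.of_forall fun s => ?_)
    simp only [Real.norm_eq_abs, abs_mul (z _), integral_const_mul]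
    rw [abs_of_nonneg (by positivity)]
    exact mul_le_mul_of_nonneg_left (integral_abs_mul_sub_le hu hv s) (abs_nonneg _)

lemma mul_conv_eq_integral (u z v : ℝ → ℝ) (t : ℝ) :
    u t * conv z v t = ∫ s, z s * (u t * v (t - s)) := by
  rw [conv, ← integral_const_mul]
  exact integral_congr_ae (Eventually.of_forall fun s => by ring)

lemma integral_mul_sub_conv (hu : MemLp u 2 volume) (hv : MemLp v 2 volume)
    (hz : Integrable z) :
    ∫ t, u t * (v t - conv z v t) = correlation u v 0 - ∫ s, z s * correlation u v s := by
  have hint := integrable_conv_integrand hu hv hz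
  have hfubini : ∫ t, u t * conv z v t = ∫ s, z s * correlation u v s := by
    simp only [mul_conv_eq_integral u z v, correlation_eq_integral_sub, ← integral_const_mul]
    exact (integral_integral_swap hint).symm
  have hconv : Integrable (fun t => u t * conv z v t) := by
    simpa only [mul_conv_eq_integral u z v] using hint.integral_prod_right
  simp only [mul_sub]
  rw [integral_sub (f := fun t => u t * v t) (hu.integrable_mul hv) hconv, hfubini,
    correlation_eq_integral_sub]
  simp only [sub_zero]

end Convolution

section Characterization

variable {u v z : ℝ → ℝ}

lemma integral_mul_sub_conv_nonneg (hu : MemLp u 2 volume) (hv : MemLp v 2 volume)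
    (hv0 : ∀ t < (0:ℝ), v t = 0) (hmax : ∀ τ, correlation u v τ ≤ correlation u v 0)
    (hz : Integrable z) (hz0 : ∀ᵐ t, 0 ≤ z t) (hz1 : ∫ t, |z t| ≤ 1) :
    0 ≤ ∫ t, u t * (v t - conv z v t) := by
  have hF0 : 0 ≤ correlation u v 0 :=
    le_of_tendsto' (tendsto_correlation_atTop hu hv hv0) hmax
  have hzF : Integrable (fun s => z s * correlation u v s) :=
    hz.mul_bdd (continuous_correlation hu hv).aestronglyMeasurable
      (Eventually.of_forall fun τ => abs_correlation_le hu hv τ)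
  rw [integral_mul_sub_conv hu hv hz, sub_nonneg]
  calc ∫ s, z s * correlation u v s ≤ ∫ s, z s * correlation u v 0 :=
        integral_mono_ae hzF (hz.mul_const _)
          (hz0.mono fun s hs => mul_le_mul_of_nonneg_left (hmax s) hs)
    _ = (∫ s, |z s|) * correlation u v 0 := by
        rw [integral_mul_const, integral_congr_ae (hz0.mono fun s hs => abs_of_nonneg hs)]
    _ ≤ correlation u v 0 := mul_le_of_le_one_left hF0 hz1

lemma le_of_forall_intervalAverage_le {f : ℝ → ℝ} (hf : Continuous f) {τ c : ℝ}
    (h : ∀ ε > 0, ε⁻¹ * ∫ s in τ..τ + ε, f s ≤ c) : f τ ≤ c := by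
  have hderiv : HasDerivAt (fun r => ∫ s in τ..r, f s) (f τ) τ :=
    intervalIntegral.integral_hasDerivAt_right (hf.intervalIntegrable _ _)
      (hf.stronglyMeasurableAtFilter _ _) hf.continuousAt
  refine le_of_tendsto hderiv.tendsto_slope_zero_right
    (eventually_nhdsWithin_of_forall fun ε hε => ?_)
  simpa only [intervalIntegral.integral_same, sub_zero, smul_eq_mul] using h ε hε

lemma correlation_le_of_forall_integral_mul_sub_conv_nonneg (hu : MemLp u 2 volume)
    (hv : MemLp v 2 volume)
    (h : ∀ z : ℝ → ℝ, Integrable z → (∀ᵐ t, 0 ≤ z t) → ∫ t, |z t| ≤ 1 →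
      0 ≤ ∫ t, u t * (v t - conv z v t)) (τ : ℝ) :
    correlation u v τ ≤ correlation u v 0 := by
  refine le_of_forall_intervalAverage_le (continuous_correlation hu hv) fun ε hε => ?_
  set z := (Ioc τ (τ + ε)).indicator fun _ => ε⁻¹
  have hz : Integrable z := (integrable_indicator_iff measurableSet_Ioc).2
    (integrableOn_const (by simp [Real.volume_Ioc]))
  have hz0 : ∀ s, 0 ≤ z s := indicator_nonneg fun _ _ => by positivity
  have hz1 : ∫ s, |z s| = 1 := by
    simp only [abs_of_nonneg (hz0 _)]
    rw [integral_indicator_const _ measurableSet_Ioc, Real.volume_real_Ioc_of_le (by linarith)]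
    simp only [add_sub_cancel_left, smul_eq_mul]
    exact mul_inv_cancel₀ hε.ne'
  have hzF : ∫ s, z s * correlation u v s = ε⁻¹ * ∫ s in τ..τ + ε, correlation u v s := by
    rw [intervalIntegral.integral_of_le (by linarith), ← integral_const_mul,
      ← integral_indicator measurableSet_Ioc]
    congr 1 with s
    by_cases hs : s ∈ Ioc τ (τ + ε) <;> simp [z, hs]
  have hnonneg := h z hz (Eventually.of_forall hz0) hz1.le
  rwa [integral_mul_sub_conv hu hv hz, sub_nonneg, hzF] at hnonneg

end Characterization

lemma IsSignal.const_mul_add {x y : ℝ → ℝ} (hx : IsSignal x) (hy : IsSignal y) (c : ℝ) :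
    IsSignal fun t => c * x t + y t :=
  ⟨(hx.1.const_mul c).add hy.1, fun t ht => show c * x t + y t = 0 by
    rw [hx.2 t ht, hy.2 t ht, mul_zero, add_zero]⟩

theorem slope_iqc_characterization_general
    (a b : ℝ)
    (Δ : (ℝ → ℝ) → (ℝ → ℝ))
    (hΔ : ∀ x, IsSignal x → IsSignal (Δ x)) :
    (∀ (τ : ℝ) (x : ℝ → ℝ), IsSignal x →
      ∫ t in Ici (0:ℝ), (x (t + τ) - b⁻¹ * Δ x (t + τ)) * (-a * x t + Δ x t)
        ≤ ∫ t in Ici (0:ℝ), (x t - b⁻¹ * Δ x t) * (-a * x t + Δ x t))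
    ↔
    (∀ z : ℝ → ℝ, Integrable z → (∀ᵐ t ∂(volume : Measure ℝ), 0 ≤ z t) →
      (∫ t, |z t|) ≤ 1 →
      ∀ x : ℝ → ℝ, IsSignal x →
        0 ≤ ∫ t, (x t - b⁻¹ * Δ x t) *
          ((-a * x t + Δ x t) - conv z (fun s => -a * x s + Δ x s) t)) := by
  have memLp_u : ∀ x, IsSignal x → MemLp (fun t => x t - b⁻¹ * Δ x t) 2 volume :=
    fun x hx => hx.1.sub ((hΔ x hx).1.const_mul b⁻¹)
  have signal_v : ∀ x, IsSignal x → IsSignal fun t => -a * x t + Δ x t :=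
    fun x hx => hx.const_mul_add (hΔ x hx) (-a)
  constructor
  · intro h z hz hz0 hz1 x hx
    refine integral_mul_sub_conv_nonneg (memLp_u x hx) (signal_v x hx).1 (signal_v x hx).2
      (fun τ => ?_) hz hz0 hz1
    simpa only [correlation_eq_setIntegral (signal_v x hx).2, add_zero] using h τ x hx
  · intro h τ x hx
    simpa only [correlation_eq_setIntegral (signal_v x hx).2, add_zero] using
      correlation_le_of_forall_integral_mul_sub_conv_nonneg (memLp_u x hx) (signal_v x hx).1
        (fun z hz hz0 hz1 => h z hz hz0 hz1 x hx) τ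

theorem slope_iqc_characterization
    (a b : ℝ) (ha : 0 ≤ a) (hab : a < b)
    (Δ : (ℝ → ℝ) → (ℝ → ℝ))
    (hΔ : ∀ x, IsSignal x → IsSignal (Δ x)) :
    (∀ (τ : ℝ) (x : ℝ → ℝ), IsSignal x →
      ∫ t in Ici (0:ℝ), (x (t + τ) - b⁻¹ * Δ x (t + τ)) * (-a * x t + Δ x t)
        ≤ ∫ t in Ici (0:ℝ), (x t - b⁻¹ * Δ x t) * (-a * x t + Δ x t))
    ↔
    (∀ z : ℝ → ℝ, Integrable z → (∀ᵐ t ∂(volume : Measure ℝ), 0 ≤ z t) →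
      (∫ t, |z t|) ≤ 1 →
      ∀ x : ℝ → ℝ, IsSignal x →
        0 ≤ ∫ t, (x t - b⁻¹ * Δ x t) *
          ((-a * x t + Δ x t) - conv z (fun s => -a * x s + Δ x s) t)) :=
  slope_iqc_characterization_general a b Δ hΔ
end
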